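/- Let w be a list over a type α of length n. Then List.foldl (fun (st : List (List α) × List α) a => ((a :: st.2) :: st.1, a :: st.2)) ([], []) w = (P, w.reverse), where P is the list [(w.take n).reverse, (w.take (n-1)).reverse, …, (w.take 1).reverse]; formally, P = (List.range n).map (fun i => (w.take (n - i)).reverse). In particular the first component of the fold is the 'prefixes' function mapping [a₁,…,aₙ] to [[aₙ,…,a₁],[aₙ₋₁,…,a₁],…,[a₁]]. -/

import Mathlib

namespace List

variable {α : Type*}

/-- `revPrefixes [a₁, …, aₙ] = [[aₙ, …, a₁], [aₙ₋₁, …, a₁], …, [a₁]]`. -/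
def revPrefixes (w : List α) : List (List α) :=
  (range w.length).map fun i => (w.take (w.length - i)).reverse

theorem revPrefixes_append_singleton (w : List α) (a : α) :
    revPrefixes (w ++ [a]) = (a :: w.reverse) :: revPrefixes w := by
  rw [revPrefixes, length_append, length_singleton, range_succ_eq_map, map_cons, map_map]
  congr 1
  · simp
  · refine map_congr_left fun i hi => ?_
    rw [mem_range] at hi
    rw [Function.comp_apply, Nat.succ_sub_succ, take_append_of_le_length (by omega)]

end List

theorem fold_prefixes {α : Type*} (w : List α) :
    List.foldl
      (fun (st : List (List α) × List α) a => ((a :: st.2) :: st.1, a :: st.2))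
      ([], []) w
      = ((List.range w.length).map (fun i => (w.take (w.length - i)).reverse),
          w.reverse) := by
  change _ = (w.revPrefixes, w.reverse)
  induction w using List.reverseRecOn with
  | nil => rfl
  | append_singleton w a ih =>
    rw [List.foldl_append, ih, List.revPrefixes_append_singleton, List.reverse_append]
    rfl
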